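/- arXiv:1412.4646 — 5 statements merged into one kernel-verified Lean document; each statement's English description precedes it below -/
import Mathlib

section
/- The number of runs in a word of length n is strictly less than n. -/
open List

universe u

/-- The factor `w[i..j]` of a word (inclusive positions). -/
def factor {α : Type u} (w : List α) (i j : ℕ) : List α := (w.drop i).take (j - i + 1)

/-- `p` is a period length of the word `u`. -/
def HasPeriodLen {α : Type u} (u : List α) (p : ℕ) : Prop :=
  1 ≤ p ∧ ∀ k, k + p < u.length → u[k]? = u[k + p]?

/-- The smallest period of a word. -/
noncomputable def minPeriod {α : Type u} (u : List α) : ℕ := sInf {p | HasPeriodLen u p}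

/-- `[i..j]` is a run in `w`: the factor is periodic with smallest period at most half
its length, and the periodicity extends neither to the left nor to the right. -/
def IsRun {α : Type u} (w : List α) (i j : ℕ) : Prop :=
  i < j ∧ j < w.length ∧
  2 * minPeriod (factor w i j) ≤ j - i + 1 ∧
  (0 < i → minPeriod (factor w i j) < minPeriod (factor w (i - 1) j)) ∧
  (j + 1 < w.length → minPeriod (factor w i j) < minPeriod (factor w i (j + 1)))

/-!
Fix a strict total order on the alphabet. Each run `[i..j]` of period `p` uses this order or its
reverse, whichever makes the letter after the run smaller than the letter one period before it.
The root of the run is primitive, so one of its rotations is a Lyndon word, and it occurs as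
`w[k..k+p-1]` with `i < k`. Such a position `k` determines the run: a Lyndon word starting at `k`
and longer than `p` either has period `p` or meets the letter after the run, so it is not Lyndon
for the same order; for the reverse order, if `p ≥ 2` the first letter after `k` that differs from
`w[k]` would have to be larger than `w[k]` in both orders, and if `p = 1` the longer root would begin
and end with the same letter; and two runs of the same period that both contain `w[k-1..k+p-1]`
coincide by maximality. The positions `k` lie in `[1, n - 1]`.
-/

open Function (swap)

section Lex
variable {α : Type*} {r : α → α → Prop} {l₁ l₂ : List α}

theorem List.IsPrefix.lex (h : l₁ <+: l₂) (hne : l₁ ≠ l₂) : Lex r l₁ l₂ := by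
  obtain ⟨t, rfl⟩ := h
  obtain ⟨b, t, rfl⟩ := exists_cons_of_ne_nil (by simpa using hne)
  simpa using Lex.append_left r (Lex.nil (a := b) (l := t)) l₁

theorem List.Lex.append_of_not_prefix (h : Lex r l₁ l₂) (hp : ¬ l₁ <+: l₂) (t₁ t₂ : List α) :
    Lex r (l₁ ++ t₁) (l₂ ++ t₂) := by
  induction h with
  | nil => exact absurd (nil_prefix) hp
  | cons _ ih => exact Lex.cons (ih fun hp' => hp ((prefix_cons_inj _).2 hp'))
  | rel h => exact Lex.rel h

theorem List.lex_of_getElem? {d : ℕ} {a b : α} (hagree : ∀ t < d, l₁[t]? = l₂[t]?)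
    (h₁ : l₁[d]? = some a) (h₂ : l₂[d]? = some b) (hab : r a b) : Lex r l₁ l₂ := by
  have htake : l₁.take d = l₂.take d := ext_getElem? fun t => by
    simp only [getElem?_take]
    split_ifs with ht
    exacts [hagree t ht, rfl]
  obtain ⟨hd₁, rfl⟩ := getElem?_eq_some_iff.1 h₁
  obtain ⟨hd₂, rfl⟩ := getElem?_eq_some_iff.1 h₂
  rw [← take_append_drop d l₁, ← take_append_drop d l₂, htake, drop_eq_getElem_cons hd₁,
    drop_eq_getElem_cons hd₂]
  exact Lex.append_left r (Lex.rel hab) _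

theorem List.lex_append_left_iff [Std.Irrefl r] (l : List α) :
    Lex r (l ++ l₁) (l ++ l₂) ↔ Lex r l₁ l₂ := by
  induction l with
  | nil => rfl
  | cons a l ih => rwa [cons_append, cons_append, lex_cons_iff]

instance List.Lex.isStrictTotalOrder [IsStrictTotalOrder α r] :
    IsStrictTotalOrder (List α) (Lex r) :=
  { isStrictWeakOrder_of_isOrderConnected with }

end Lex

section Lyndon
variable {α : Type*} {r : α → α → Prop} {u v : List α}

def IsLyndon (r : α → α → Prop) (u : List α) : Prop :=
  u ≠ [] ∧ ∀ k, 0 < k → k < u.length → Lex r u (u.drop k)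

theorem HasPeriodLen.drop_prefix {p : ℕ} (hp : HasPeriodLen u p) : u.drop p <+: u := by
  rw [prefix_iff_eq_take]
  refine ext_getElem? fun t => ?_
  rw [getElem?_drop, getElem?_take, length_drop]
  split_ifs with ht
  · rw [hp.2 t (by omega), Nat.add_comm]
  · exact getElem?_eq_none (by omega)

namespace IsLyndon

theorem length_le_of_hasPeriodLen [Std.Asymm r] (hu : IsLyndon r u) {p : ℕ}
    (hp : HasPeriodLen u p) : u.length ≤ p := by
  by_contra! hlt
  refine _root_.asymm (hu.2 p hp.1 hlt) (hp.drop_prefix.lex fun h => ?_)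
  have := congrArg length h
  simp only [length_drop] at this
  have := hp.1
  omega

theorem not_rel_of_agree [Std.Asymm r] (hu : IsLyndon r u) {p d : ℕ} {a b : α} (hp : 0 < p)
    (hagree : ∀ t < d, u[t]? = u[t + p]?) (ha : u[d]? = some a) (hb : u[d + p]? = some b) :
    ¬ r b a := fun hba => by
  have hdp : d + p < u.length := (List.getElem?_eq_some_iff.1 hb).1
  refine _root_.asymm (hu.2 p hp (by omega)) (lex_of_getElem? (d := d) (fun t ht => ?_) ?_ ha hba)
  · rw [getElem?_drop, hagree t ht, Nat.add_comm]
  · rw [getElem?_drop, Nat.add_comm, hb]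

theorem getElem?_zero_ne [Std.Asymm r] (hu : IsLyndon r u) (h2 : 2 ≤ u.length) :
    u[0]? ≠ u[u.length - 1]? := fun h => by
  have := hu.length_le_of_hasPeriodLen (p := u.length - 1) ⟨by omega, fun t ht => by
    obtain rfl : t = 0 := by omega
    simpa using h⟩
  omega

theorem not_isLyndon_swap_of_prefix [IsStrictTotalOrder α r] (hu : IsLyndon r u) (huv : u <+: v)
    (hu2 : 2 ≤ u.length) : ¬ IsLyndon (swap r) v := fun hv => by
  classical
  -- at the first failure `d` of period 1, `u` steps up for `r` and `v` steps up for `swap r`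
  have hex : ∃ d, d + 1 < u.length ∧ u[d]? ≠ u[d + 1]? := by
    by_contra! h
    have := hu.length_le_of_hasPeriodLen ⟨le_rfl, h⟩
    omega
  obtain ⟨hd, hne⟩ := Nat.find_spec hex
  set d := Nat.find hex
  have hagree : ∀ t < d, u[t]? = u[t + 1]? := fun t ht => by
    by_contra h
    exact Nat.find_min hex ht ⟨by omega, h⟩
  obtain ⟨t, rfl⟩ := huv
  have hv_agree : ∀ t' < d, (u ++ t)[t']? = (u ++ t)[t' + 1]? := fun t' ht' => by
    rw [getElem?_append_left (by omega), getElem?_append_left (by omega), hagree t' ht']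
  have ha := getElem?_eq_getElem (show d < u.length by omega)
  have hb := getElem?_eq_getElem hd
  rcases trichotomous_of r u[d] u[d + 1] with h | h | h
  · exact hv.not_rel_of_agree one_pos hv_agree
      (by rwa [getElem?_append_left (by omega)]) (by rwa [getElem?_append_left hd]) h
  · exact hne (by rw [ha, hb, h])
  · exact hu.not_rel_of_agree one_pos hagree ha hb h

end IsLyndon

theorem isLyndon_of_lex_rotate [IsStrictTotalOrder α r] (hne : u ≠ [])
    (h : ∀ m, 0 < m → m < u.length → Lex r u (u.rotate m)) : IsLyndon r u := by
  refine ⟨hne, fun k hk hku => ?_⟩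
  have hrot : u.rotate k = u.drop k ++ u.take k := rotate_eq_drop_append_take hku.le
  rcases trichotomous_of (Lex r) u (u.drop k) with hlt | heq | hgt
  · exact hlt
  · exact absurd (congrArg length heq) (by simp only [length_drop]; omega)
  exfalso
  by_cases hpre : u.drop k <+: u
  · -- `u = x ++ v = v ++ z`; the rotations `v ++ x` and `z ++ v` force `z < x` and `x < z`
    set v := u.drop k
    set x := u.take k
    obtain ⟨z, hz⟩ := hpre
    have hzx : Lex r z x := by
      have := h k hk hku
      rwa [hrot, ← hz, lex_append_left_iff] at this
    have hxz : Lex r (x ++ v) (z ++ v) := by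
      have := h v.length (by simp [v]; omega) (by simp [v]; omega)
      rwa [rotate_eq_drop_append_take (by simp [v]), ← hz, drop_left, take_left, hz,
        ← take_append_drop k u] at this
    have hlen : z.length = x.length := by
      have := congrArg length hz
      simp only [length_append, length_drop, length_take, v, x] at this ⊢
      omega
    have hnpre : ¬ z <+: x := fun hp => irrefl_of (Lex r) z (by rwa [← hp.eq_of_length hlen] at hzx)
    exact _root_.asymm hxz (hzx.append_of_not_prefix hnpre v v)
  · have := hgt.append_of_not_prefix hpre (u.take k) []
    rw [append_nil, ← hrot] at this
    exact _root_.asymm (h k hk hku) this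

theorem exists_isLyndon_rotate [IsStrictTotalOrder α r] (hne : u ≠ [])
    (hprim : ∀ m, 0 < m → m < u.length → u.rotate m ≠ u) :
    ∃ m < u.length, IsLyndon r (u.rotate m) := by
  classical
  let _ := linearOrderOfSTO (Lex r)
  have hpos : 0 < u.length := length_pos_iff.2 hne
  obtain ⟨m, hm, hmin⟩ := (Finset.range u.length).exists_min_image u.rotate
    ⟨0, Finset.mem_range.2 hpos⟩
  refine ⟨m, Finset.mem_range.1 hm, isLyndon_of_lex_rotate (by simpa using hne) fun k hk hku => ?_⟩
  rw [length_rotate] at hku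
  rw [rotate_rotate, ← rotate_mod u (m + k)]
  rcases hmin ((m + k) % u.length) (Finset.mem_range.2 (Nat.mod_lt _ hpos)) with heq | hlt
  · rw [rotate_mod, Nat.add_comm, ← rotate_rotate, eq_comm, rotate_eq_rotate] at heq
    exact absurd heq (hprim k hk hku)
  · exact hlt

end Lyndon

theorem Nat.exists_lt_add_modEq (s t : ℕ) {p : ℕ} (hp : 0 < p) : ∃ a < p, s + a ≡ t [MOD p] := by
  refine ⟨(t + p * s - s) % p, Nat.mod_lt _ hp, ?_⟩
  calc s + (t + p * s - s) % p ≡ s + (t + p * s - s) [MOD p] := (Nat.mod_modEq _ _).add_left s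
    _ = t + p * s := by have := Nat.le_mul_of_pos_left s hp; omega
    _ ≡ t [MOD p] := Nat.add_mul_mod_self_left t p s

section Periodicity
variable {α : Type*} {w : List α} {i j p : ℕ}

def PeriodOn (w : List α) (i j p : ℕ) : Prop :=
  ∀ t, i ≤ t → t + p ≤ j → w[t]? = w[t + p]?

namespace PeriodOn

theorem getElem?_add_mul (h : PeriodOn w i j p) {t : ℕ} (c : ℕ) (ht : i ≤ t)
    (htc : t + c * p ≤ j) : w[t]? = w[t + c * p]? := by
  induction c with
  | zero => simp
  | succ c ih =>
    rw [Nat.succ_mul] at htc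
    rw [ih (by omega), h _ (by omega) (by omega), Nat.succ_mul, Nat.add_assoc]

theorem getElem?_eq_of_modEq (h : PeriodOn w i j p) {t t' : ℕ} (ht : i ≤ t) (ht' : i ≤ t')
    (htj : t ≤ j) (htj' : t' ≤ j) (hmod : t ≡ t' [MOD p]) : w[t]? = w[t']? := by
  wlog hle : t ≤ t' generalizing t t'
  · exact (this ht' ht htj' htj hmod.symm (by omega)).symm
  obtain ⟨c, hc⟩ := (Nat.modEq_iff_dvd' hle).1 hmod
  rw [show t' = t + c * p by rw [Nat.mul_comm]; omega]
  exact h.getElem?_add_mul c ht (by rw [Nat.mul_comm]; omega)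

theorem hasPeriodLen_take_drop (h : PeriodOn w i j p) (hp : 1 ≤ p) {k q : ℕ} (hk : i ≤ k)
    (hkq : k + q ≤ j + 1) : HasPeriodLen ((w.drop k).take q) p := by
  refine ⟨hp, fun t ht => ?_⟩
  have htq : t + p < q := lt_of_lt_of_le ht (length_take_le _ _)
  rw [getElem?_take, getElem?_take, if_pos (by omega), if_pos htq, getElem?_drop, getElem?_drop,
    ← Nat.add_assoc]
  exact h _ (by omega) (by omega)

theorem rotate_take_drop (h : PeriodOn w i j p) (hj : j < w.length) {s m : ℕ} (hs : i ≤ s)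
    (hsm : s + m + p ≤ j + 1) : ((w.drop s).take p).rotate m = (w.drop (s + m)).take p := by
  have hlen : ((w.drop s).take p).length = p := by simp; omega
  refine ext_getElem? fun t => ?_
  rcases lt_or_ge t p with ht | ht
  · have hp : 0 < p := by omega
    rw [getElem?_rotate (by omega), hlen, getElem?_take, getElem?_take, if_pos (Nat.mod_lt _ hp),
      if_pos ht, getElem?_drop, getElem?_drop]
    refine h.getElem?_eq_of_modEq (by omega) (by omega)
      (by have := Nat.mod_lt (t + m) hp; omega) (by omega) ?_
    exact ((Nat.mod_modEq _ _).add_left s).trans (by rw [Nat.add_comm t m, Nat.add_assoc])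
  · rw [getElem?_eq_none (by simp; omega), getElem?_eq_none (by simp; omega)]

theorem of_rotate_eq (h : PeriodOn w i j p) (hp : 0 < p) (hj : j < w.length) {s m : ℕ}
    (hs : i ≤ s) (hsp : s + p ≤ j + 1)
    (hrot : ((w.drop s).take p).rotate m = (w.drop s).take p) : PeriodOn w i j m := by
  intro t ht htm
  set x := (w.drop s).take p
  have hx : x.length = p := by simp [x]; omega
  have hxw : ∀ a < p, x[a]? = w[s + a]? := fun a ha => by
    rw [getElem?_take, if_pos ha, getElem?_drop]
  obtain ⟨a, ha, hmod⟩ := Nat.exists_lt_add_modEq s t hp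
  have ham := Nat.mod_lt (a + m) hp
  calc w[t]? = w[s + a]? := h.getElem?_eq_of_modEq ht (by omega) (by omega) (by omega) hmod.symm
    _ = (x.rotate m)[a]? := by rw [hrot, hxw a ha]
    _ = w[s + (a + m) % p]? := by rw [getElem?_rotate (by omega), hx, hxw _ ham]
    _ = w[t + m]? := h.getElem?_eq_of_modEq (by omega) (by omega) (by omega) (by omega)
        (((Nat.mod_modEq _ _).add_left s).trans (by rw [← Nat.add_assoc]; exact hmod.add_right m))

end PeriodOn

theorem hasPeriodLen_factor_iff (hij : i ≤ j) (hj : j < w.length) (hp : 1 ≤ p) :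
    HasPeriodLen (factor w i j) p ↔ PeriodOn w i j p := by
  have hlen : (factor w i j).length = j - i + 1 := by simp [factor]; omega
  have hget : ∀ k < j - i + 1, (factor w i j)[k]? = w[i + k]? := fun k hk => by
    rw [factor, getElem?_take, if_pos hk, getElem?_drop]
  refine ⟨fun h t ht htp => ?_, fun h => ⟨hp, fun k hk => ?_⟩⟩
  · have := h.2 (t - i) (by omega)
    rwa [hget _ (by omega), hget _ (by omega), show i + (t - i) = t by omega,
      show i + (t - i + p) = t + p by omega] at this
  · rw [hget _ (by omega), hget _ (by omega), ← Nat.add_assoc]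
    exact h _ (by omega) (by omega)

end Periodicity

section Runs
variable {α : Type*} {w : List α} {i j i' j' k : ℕ}

theorem hasPeriodLen_minPeriod (u : List α) : HasPeriodLen u (minPeriod u) :=
  Nat.sInf_mem (⟨u.length + 1, by omega, fun _ _ => by omega⟩ : ∃ p, HasPeriodLen u p)

theorem one_le_minPeriod (u : List α) : 1 ≤ minPeriod u :=
  (hasPeriodLen_minPeriod u).1

theorem minPeriod_le {u : List α} {p : ℕ} (h : HasPeriodLen u p) : minPeriod u ≤ p :=
  Nat.sInf_le h

namespace IsRun

theorem periodOn (h : IsRun w i j) : PeriodOn w i j (minPeriod (factor w i j)) :=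
  (hasPeriodLen_factor_iff h.1.le h.2.1 (one_le_minPeriod _)).1 (hasPeriodLen_minPeriod _)

theorem minPeriod_le_of_periodOn (h : IsRun w i j) {q : ℕ} (hq : 1 ≤ q) (hper : PeriodOn w i j q) :
    minPeriod (factor w i j) ≤ q :=
  minPeriod_le ((hasPeriodLen_factor_iff h.1.le h.2.1 hq).2 hper)

theorem getElem?_pred_ne (h : IsRun w i j) (hi : 0 < i) :
    w[i - 1]? ≠ w[i - 1 + minPeriod (factor w i j)]? := fun heq => by
  have hp := one_le_minPeriod (factor w i j)
  have hij := h.1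
  have hper : PeriodOn w (i - 1) j (minPeriod (factor w i j)) := fun t ht htp => by
    rcases ht.eq_or_lt with rfl | hlt
    · exact heq
    · exact h.periodOn t (by omega) htp
  have := minPeriod_le ((hasPeriodLen_factor_iff (by omega) h.2.1 hp).2 hper)
  exact absurd (h.2.2.2.1 hi) (not_lt.2 this)

theorem getElem?_succ_ne (h : IsRun w i j) :
    w[j + 1]? ≠ w[j + 1 - minPeriod (factor w i j)]? := fun heq => by
  have hp := one_le_minPeriod (factor w i j)
  have h2p := h.2.2.1
  have hj := h.2.1
  by_cases hj1 : j + 1 < w.length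
  · have hper : PeriodOn w i (j + 1) (minPeriod (factor w i j)) := fun t ht htp => by
      rcases htp.eq_or_lt with htp | htp
      · rw [htp, show t = j + 1 - minPeriod (factor w i j) by omega, heq]
      · exact h.periodOn t ht (by omega)
    have := minPeriod_le ((hasPeriodLen_factor_iff (by omega) hj1 hp).2 hper)
    exact absurd (h.2.2.2.2 hj1) (not_lt.2 this)
  · rw [getElem?_eq_none (by omega), getElem?_eq_getElem (by omega)] at heq
    simp at heq

theorem start_le_of_periodOn (h : IsRun w i j)
    (hper : PeriodOn w i' j' (minPeriod (factor w i j)))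
    (hlen : i + minPeriod (factor w i j) ≤ j' + 1) : i ≤ i' := by
  by_contra! hlt
  exact h.getElem?_pred_ne (by omega) (hper _ (by omega) (by omega))

theorem end_ge_of_periodOn (h : IsRun w i j)
    (hper : PeriodOn w i' j' (minPeriod (factor w i j)))
    (hlen : i' + minPeriod (factor w i j) ≤ j + 1) : j' ≤ j := by
  by_contra! hlt
  have := hper (j + 1 - minPeriod (factor w i j)) (by omega) (by omega)
  rw [Nat.sub_add_cancel (by omega)] at this
  exact h.getElem?_succ_ne this.symm

theorem eq_of_minPeriod_eq (h : IsRun w i j) (h' : IsRun w i' j')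
    (hpp : minPeriod (factor w i j) = minPeriod (factor w i' j'))
    (hk : i < k) (hkp : k + minPeriod (factor w i j) ≤ j + 1)
    (hk' : i' < k) (hkp' : k + minPeriod (factor w i' j') ≤ j' + 1) : i = i' ∧ j = j' := by
  have hper := h.periodOn
  have hper' := h'.periodOn
  rw [← hpp] at hper' hkp'
  refine ⟨le_antisymm (h.start_le_of_periodOn hper' (by omega)) ?_,
    le_antisymm ?_ (h.end_ge_of_periodOn hper' (by omega))⟩
  · exact h'.start_le_of_periodOn (hpp ▸ hper) (by omega)
  · exact h'.end_ge_of_periodOn (hpp ▸ hper) (by omega)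

end IsRun
end Runs

section LyndonRoots
variable {α : Type*} {r ρ ρ' : α → α → Prop} {w : List α} {i j i' j' k : ℕ}

theorem exists_rel_or_swap [IsStrictTotalOrder α r] {x y : Option α} (hxy : x ≠ y) :
    ∃ ρ, (ρ = r ∨ ρ = swap r) ∧ ∀ a b, x = some a → y = some b → ρ a b := by
  rcases x with _ | a
  · exact ⟨r, Or.inl rfl, fun _ _ h => nomatch h⟩
  rcases y with _ | b
  · exact ⟨r, Or.inl rfl, fun _ _ _ h => nomatch h⟩
  rcases trichotomous_of r a b with hab | rfl | hba
  · exact ⟨r, Or.inl rfl, fun _ _ ha hb => Option.some_inj.1 ha ▸ Option.some_inj.1 hb ▸ hab⟩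
  · exact absurd rfl hxy
  · exact ⟨swap r, Or.inr rfl, fun _ _ ha hb => Option.some_inj.1 ha ▸ Option.some_inj.1 hb ▸ hba⟩

theorem PeriodOn.exists_isLyndon_take_drop [IsStrictTotalOrder α ρ] {p : ℕ}
    (hper : PeriodOn w i j p) (hj : j < w.length) (hp : 0 < p) (h2p : i + 2 * p ≤ j + 1)
    (hmin : ∀ q, 0 < q → q < p → ¬ PeriodOn w i j q) :
    ∃ k, i < k ∧ k + p ≤ j + 1 ∧ IsLyndon ρ ((w.drop k).take p) := by
  set x := (w.drop (i + 1)).take p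
  have hx : x.length = p := by simp [x]; omega
  obtain ⟨m, hm, hlyn⟩ := exists_isLyndon_rotate (r := ρ) (u := x) (ne_nil_of_length_pos (by omega))
    fun m hm hmp hrot => hmin m hm (by omega) (hper.of_rotate_eq hp hj (by omega) (by omega) hrot)
  rw [hx] at hm
  rw [hper.rotate_take_drop hj (by omega) (by omega)] at hlyn
  exact ⟨i + 1 + m, by omega, by omega, hlyn⟩

/-- `w[k..k+p-1]` is a Lyndon rotation of the root of the run `[i..j]` of period `p`, for the order
`ρ` of the run: the letter after the run is `ρ`-below the letter one period earlier. -/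
def IsLyndonRoot (ρ : α → α → Prop) (w : List α) (i j k : ℕ) : Prop :=
  (∀ a b, w[j + 1]? = some a → w[j + 1 - minPeriod (factor w i j)]? = some b → ρ a b) ∧
    i < k ∧ k + minPeriod (factor w i j) ≤ j + 1 ∧
    IsLyndon ρ ((w.drop k).take (minPeriod (factor w i j)))

theorem IsRun.exists_isLyndonRoot [IsStrictTotalOrder α r] (h : IsRun w i j) :
    ∃ ρ, (ρ = r ∨ ρ = swap r) ∧ ∃ k, IsLyndonRoot ρ w i j k := by
  obtain ⟨ρ, hρ, horient⟩ := exists_rel_or_swap (r := r) h.getElem?_succ_ne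
  have : IsStrictTotalOrder α ρ := by rcases hρ with rfl | rfl <;> infer_instance
  obtain ⟨k, hk, hkp, hlyn⟩ := h.periodOn.exists_isLyndon_take_drop (ρ := ρ) h.2.1
    (one_le_minPeriod _) (by have := h.1; have := h.2.2.1; omega)
    fun q hq hqp hper => absurd (h.minPeriod_le_of_periodOn hq hper) (by omega)
  exact ⟨ρ, hρ, k, horient, hk, hkp, hlyn⟩

theorem IsLyndonRoot.mem_Icc (h : IsRun w i j) (hk : IsLyndonRoot ρ w i j k) :
    k ∈ Finset.Icc 1 (w.length - 1) := by
  have := h.2.1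
  have := hk.2.1
  have := hk.2.2.1
  have := one_le_minPeriod (factor w i j)
  rw [Finset.mem_Icc]
  omega

theorem IsRun.not_isLyndon_take_drop [Std.Asymm ρ] (h : IsRun w i j)
    (horient : ∀ a b, w[j + 1]? = some a → w[j + 1 - minPeriod (factor w i j)]? = some b → ρ a b)
    (hk : i ≤ k) (hkp : k + minPeriod (factor w i j) ≤ j + 1) {q : ℕ}
    (hpq : minPeriod (factor w i j) < q) (hkq : k + q ≤ w.length) :
    ¬ IsLyndon ρ ((w.drop k).take q) := fun hlyn => by
  set p := minPeriod (factor w i j)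
  have hper := h.periodOn
  have hp := one_le_minPeriod (factor w i j)
  by_cases hin : k + q ≤ j + 1
  · have := hlyn.length_le_of_hasPeriodLen (hper.hasPeriodLen_take_drop hp hk hin)
    simp only [length_take, length_drop] at this
    omega
  -- the letter after the run breaks the period `p` inside the word, in the wrong direction
  have hj1 : j + 1 < w.length := by omega
  have hget : ∀ t < q, ((w.drop k).take q)[t]? = w[k + t]? := fun t ht => by
    rw [getElem?_take, if_pos ht, getElem?_drop]
  refine hlyn.not_rel_of_agree (d := j + 1 - p - k) (p := p) hp (fun t ht => ?_)
    (by rw [hget _ (by omega), show k + (j + 1 - p - k) = j + 1 - p by omega,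
      getElem?_eq_getElem (by omega)])
    (by rw [hget _ (by omega), show k + (j + 1 - p - k + p) = j + 1 by omega,
      getElem?_eq_getElem hj1])
    (horient _ _ (getElem?_eq_getElem hj1) (getElem?_eq_getElem _))
  rw [hget _ (by omega), hget _ (by omega), ← Nat.add_assoc]
  exact hper _ (by omega) (by omega)

theorem IsLyndonRoot.minPeriod_le_of_swap [IsStrictTotalOrder α ρ] (h : IsRun w i j)
    (h' : IsRun w i' j') (hk : IsLyndonRoot ρ w i j k) (hk' : IsLyndonRoot (swap ρ) w i' j' k) :
    minPeriod (factor w i' j') ≤ minPeriod (factor w i j) := by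
  by_contra! hlt
  obtain ⟨-, hik, hkp, hlyn⟩ := hk
  obtain ⟨-, hik', hkp', hlyn'⟩ := hk'
  set p := minPeriod (factor w i j)
  set p' := minPeriod (factor w i' j')
  have hn := h'.2.1
  have hlen : ∀ q ≤ p', ((w.drop k).take q).length = q := fun q hq => by simp; omega
  rcases (one_le_minPeriod (factor w i j)).eq_or_lt with hp1 | hp2
  · -- the run of period 1 forces the root of the other run to begin and end with the same letter
    refine hlyn'.getElem?_zero_ne (by rw [hlen p' le_rfl]; omega) ?_
    have e1 := h.periodOn (k - 1) (by omega) (by omega)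
    have e2 := h'.periodOn (k - 1) (by omega) (by omega)
    rw [← hp1, Nat.sub_add_cancel (by omega)] at e1
    rw [show k - 1 + p' = k + (p' - 1) by omega] at e2
    rw [hlen p' le_rfl, getElem?_take, getElem?_take, if_pos (by omega), if_pos (by omega),
      getElem?_drop, getElem?_drop, Nat.add_zero, ← e1, e2]
  · exact hlyn.not_isLyndon_swap_of_prefix (take_prefix_take_left hlt.le) (by rw [hlen p hlt.le]; omega)
      hlyn'

theorem IsLyndonRoot.minPeriod_le [IsStrictTotalOrder α ρ] (h : IsRun w i j) (h' : IsRun w i' j')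
    (hρ' : ρ' = ρ ∨ ρ' = swap ρ) (hk : IsLyndonRoot ρ w i j k) (hk' : IsLyndonRoot ρ' w i' j' k) :
    minPeriod (factor w i' j') ≤ minPeriod (factor w i j) := by
  rcases hρ' with rfl | rfl
  · by_contra! hlt
    exact h.not_isLyndon_take_drop hk.1 hk.2.1.le hk.2.2.1 hlt
      (by have := h'.2.1; have := hk'.2.2.1; omega) hk'.2.2.2
  · exact hk.minPeriod_le_of_swap h h' hk'

theorem IsLyndonRoot.unique [IsStrictTotalOrder α r] (h : IsRun w i j) (h' : IsRun w i' j')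
    (hρ : ρ = r ∨ ρ = swap r) (hρ' : ρ' = r ∨ ρ' = swap r)
    (hk : IsLyndonRoot ρ w i j k) (hk' : IsLyndonRoot ρ' w i' j' k) : i = i' ∧ j = j' := by
  have hpp : minPeriod (factor w i j) = minPeriod (factor w i' j') := by
    rcases hρ with rfl | rfl <;> rcases hρ' with rfl | rfl <;>
      exact le_antisymm (hk'.minPeriod_le h' h (by first | exact Or.inl rfl | exact Or.inr rfl) hk)
        (hk.minPeriod_le h h' (by first | exact Or.inl rfl | exact Or.inr rfl) hk')
  exact h.eq_of_minPeriod_eq h' hpp hk.2.1 hk.2.2.1 hk'.2.1 hk'.2.2.1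

end LyndonRoots

theorem Set.ncard_le_ncard_of_forall_subsingleton {β γ : Type*} {s : Set β} {t : Set γ}
    (R : β → γ → Prop) (hs : ∀ a ∈ s, ∃ b ∈ t, R a b)
    (ht : ∀ b ∈ t, {a ∈ s | R a b}.Subsingleton) (htf : t.Finite) : s.ncard ≤ t.ncard := by
  rcases s.eq_empty_or_nonempty with rfl | ⟨a₀, ha₀⟩
  · simp
  have : Nonempty γ := ⟨(hs a₀ ha₀).choose⟩
  choose! f hf hR using hs
  exact ncard_le_ncard_of_injOn f hf
    (fun a ha a' ha' he => ht (f a) (hf a ha) ⟨ha, hR a ha⟩ ⟨ha', he ▸ hR a' ha'⟩) htf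

/-- The number of runs in a word of length `n` is strictly less than `n`. -/
theorem runs_lt_length {α : Type u} (w : List α) (hw : w ≠ []) :
    {ij : ℕ × ℕ | IsRun w ij.1 ij.2}.ncard < w.length := by
  have hkeys := Set.ncard_le_ncard_of_forall_subsingleton (s := {ij : ℕ × ℕ | IsRun w ij.1 ij.2})
    (t := ↑(Finset.Icc 1 (w.length - 1)))
    (fun ij k => ∃ ρ, (ρ = WellOrderingRel ∨ ρ = swap WellOrderingRel) ∧
      IsLyndonRoot ρ w ij.1 ij.2 k)
    (fun ij hij => by
      obtain ⟨ρ, hρ, k, hk⟩ := IsRun.exists_isLyndonRoot (r := WellOrderingRel) hij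
      exact ⟨k, hk.mem_Icc hij, ρ, hρ, hk⟩)
    (fun k _ ij ⟨hij, ρ, hρ, hk⟩ ij' ⟨hij', ρ', hρ', hk'⟩ =>
      Prod.ext_iff.2 (hk.unique hij hij' hρ hρ' hk'))
    (Finset.finite_toSet _)
  rw [Set.ncard_coe_finset, Nat.card_Icc] at hkeys
  have := length_pos_iff.2 hw
  omega
end

section
/- The greatest conjugate (rotation) of a primitive word under lexicographic order is border-free. -/
/-!
If `c = b ++ s = p ++ b` had a border `b`, maximality of `c` against its conjugates `b ++ p`
and `s ++ b` would give `p ≤ s` and (as `p` and `s` have the same length) `s ≤ p`. Then `b`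
commutes with `s`, so both are powers of one word, and `c`, hence its conjugate `v`, is a
proper power.
-/

open List

universe u

/-- A border of `u`: a nonempty proper prefix that is also a suffix. -/
def IsBorder {α : Type u} (b u : List α) : Prop := b ≠ [] ∧ b ≠ u ∧ b <+: u ∧ b <:+ u

/-- A word is border-free if it has no border. -/
def BorderFree {α : Type u} (u : List α) : Prop := ∀ b, ¬ IsBorder b u
/-- `listPow u n` is the `n`-th power `u^n` of the word `u`. -/
def listPow {α : Type u} (v : List α) : ℕ → List α
  | 0 => []
  | n + 1 => v ++ listPow v n

/-- A word is primitive if it is not a proper power. -/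
def Primitive {α : Type u} (v : List α) : Prop :=
  v ≠ [] ∧ ∀ r n, 2 ≤ n → v ≠ listPow r n

/-- `c` is a conjugate (rotation) of `v`. -/
def IsConjWord {α : Type u} (v c : List α) : Prop := ∃ s t, v = s ++ t ∧ c = t ++ s

section Words

variable {α : Type u}

theorem listPow_nil (n : ℕ) : listPow ([] : List α) n = [] := by
  induction n with
  | zero => rfl
  | succ n ih => simp [listPow, ih]

theorem listPow_add (z : List α) (m n : ℕ) :
    listPow z (m + n) = listPow z m ++ listPow z n := by
  induction m with
  | zero => simp [listPow]
  | succ m ih => simp [listPow, Nat.succ_add, ih]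

theorem listPow_succ (z : List α) (n : ℕ) : listPow z (n + 1) = listPow z n ++ z := by
  rw [listPow_add]; simp [listPow]

theorem append_listPow_append_eq (x y : List α) (n : ℕ) :
    y ++ listPow (x ++ y) n = listPow (y ++ x) n ++ y := by
  induction n with
  | zero => simp [listPow]
  | succ n ih => simp [listPow, ← ih]

theorem listPow_rotate_one (z : List α) (n : ℕ) :
    (listPow z n).rotate 1 = listPow (z.rotate 1) n := by
  rcases z with _ | ⟨a, t⟩
  · simp [listPow_nil]
  rcases n with _ | n
  · rfl
  calc (listPow (a :: t) (n + 1)).rotate 1 = t ++ listPow ([a] ++ t) n ++ [a] := by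
        simp [listPow]
    _ = listPow ((a :: t).rotate 1) (n + 1) := by
        rw [append_listPow_append_eq, listPow_succ, append_assoc]; simp

theorem listPow_rotate (z : List α) (n k : ℕ) :
    (listPow z n).rotate k = listPow (z.rotate k) n := by
  induction k with
  | zero => simp
  | succ k ih => rw [← rotate_rotate, ih, listPow_rotate_one, rotate_rotate]

theorem exists_eq_append_of_append_comm {x y : List α} (h : x ++ y = y ++ x)
    (hxy : x.length ≤ y.length) : ∃ y', y = x ++ y' ∧ x ++ y' = y' ++ x := by
  obtain ⟨y', rfl⟩ : x <+: y :=
    prefix_of_prefix_length_le (h ▸ prefix_append x y) (prefix_append y x) hxy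
  refine ⟨y', rfl, append_cancel_left (as := x) ?_⟩
  simpa using h

theorem exists_listPow_of_append_comm {x y : List α} (h : x ++ y = y ++ x) :
    ∃ z i j, x = listPow z i ∧ y = listPow z j := by
  rcases eq_or_ne x [] with rfl | hx
  · exact ⟨y, 0, 1, rfl, by simp [listPow]⟩
  rcases eq_or_ne y [] with rfl | hy
  · exact ⟨x, 1, 0, by simp [listPow], rfl⟩
  rcases le_total x.length y.length with hxy | hyx
  · obtain ⟨y', hy', h'⟩ := exists_eq_append_of_append_comm h hxy
    obtain ⟨z, i, j, rfl, rfl⟩ := exists_listPow_of_append_comm h'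
    exact ⟨z, i, i + j, rfl, hy'.trans (listPow_add z i j).symm⟩
  · obtain ⟨x', hx', h'⟩ := exists_eq_append_of_append_comm h.symm hyx
    obtain ⟨z, i, j, rfl, rfl⟩ := exists_listPow_of_append_comm h'
    exact ⟨z, i + j, i, hx'.trans (listPow_add z i j).symm, rfl⟩
termination_by x.length + y.length
decreasing_by
  · have := length_pos_iff.mpr hx; grind
  · have := length_pos_iff.mpr hy; grind

theorem isConjWord_iff_isRotated {v c : List α} : IsConjWord v c ↔ v ~r c := by
  constructor
  · rintro ⟨s, t, rfl, rfl⟩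
    exact isRotated_append
  · intro h
    obtain ⟨n, hn, rfl⟩ := isRotated_iff_mod.mp h
    exact ⟨v.take n, v.drop n, (take_append_drop n v).symm, rotate_eq_drop_append_take hn⟩

theorem append_right_lt_of_length_eq [LT α] :
    ∀ {l₁ l₂ : List α}, l₁ < l₂ → l₁.length = l₂.length → ∀ l₃, l₁ ++ l₃ < l₂ ++ l₃
  | _, _, .nil, hl, _ => by simp at hl
  | _, _, .cons h, hl, l₃ => .cons (append_right_lt_of_length_eq h (by simpa using hl) l₃)
  | _, _, .rel h, _, _ => .rel h

end Words

/-- The greatest conjugate of a primitive word under lexicographic order is border-free. -/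
theorem greatest_conjugate_borderFree {α : Type u} [LinearOrder α] (v c : List α)
    (hv : Primitive v) (hc : IsConjWord v c)
    (hmax : ∀ c', IsConjWord v c' → c' ≤ c) :
    BorderFree c := by
  rintro b ⟨hb, hbc, ⟨s, rfl⟩, ⟨p, hp⟩⟩
  have hvc : v ~r b ++ s := isConjWord_iff_isRotated.mp hc
  have hmax_rot (d : List α) (hd : b ++ s ~r d) : d ≤ b ++ s :=
    hmax d (isConjWord_iff_isRotated.mpr (hvc.trans hd))
  have hlen : p.length = s.length := by
    have := congrArg length hp; simp only [length_append] at this; omega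
  have hps : p ≤ s := not_lt.mp fun h =>
    (hmax_rot (b ++ p) (hp ▸ isRotated_append)).not_gt (append_left_lt h)
  have hsp : s ≤ p := not_lt.mp fun h =>
    (hmax_rot (s ++ b) isRotated_append).not_gt (hp ▸ append_right_lt_of_length_eq h hlen b)
  obtain rfl := le_antisymm hps hsp
  obtain ⟨z, i, j, rfl, rfl⟩ := exists_listPow_of_append_comm hp.symm
  have hi : i ≠ 0 := by rintro rfl; exact hb rfl
  have hj : j ≠ 0 := by rintro rfl; exact hbc (append_nil _).symm
  obtain ⟨n, rfl⟩ := hvc.symm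
  exact hv.2 (z.rotate n) (i + j) (by omega) (by rw [← listPow_add, listPow_rotate])
end

section
/- Let x² = (vu)² be a square whose root conjugate uv is border-free. Then at least one of the positions |v| or |vuv| is a critical position of x², i.e., the local period at that position equals |uv|. -/
open List

universe u

/-- `y` is a local repetition word at position `m` of `z`: `y` is nonempty, `y` is a
suffix of `z[0..m-1]` or `z[0..m-1]` is a suffix of `y`, and `y` is a prefix of
`z[m..]` or `z[m..]` is a prefix of `y`. -/
def LocalRep {α : Type u} (z : List α) (m : ℕ) (y : List α) : Prop :=
  y ≠ [] ∧ (y <:+ z.take m ∨ z.take m <:+ y) ∧ (y <+: z.drop m ∨ z.drop m <+: y)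

/-- The local period at position `m` of `z`: the length of the shortest local
repetition word at `m`. -/
noncomputable def localPeriod {α : Type u} (z : List α) (m : ℕ) : ℕ :=
  sInf {ℓ | ∃ y, LocalRep z m y ∧ y.length = ℓ}

/-!
A local repetition at `|v|` in `vuvu` shorter than `uv` is a prefix of `uv`; it cannot be a
suffix of `v` (it would be a border of `uv`), so it ends with `v`, and `v` occurs in `uv` at a
position `|s| < |u|`. Symmetrically, a short one at `|vuv|` makes `u` occur in `uv` at a position
`|q| > 0`. Comparing each with the trivial occurrence gives `uv` the period `|u| - |s|` on
`[|s|, |uv|)` and the period `|q|` on `[0, |q| + |u|)`. Their overlap has length the sum of the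
two periods, so by Fine–Wilf it has period `g = gcd (|u| - |s|) |q|`, which each of the two
periods carries across its own interval, hence to all of `uv`. As `g < |uv|`, `uv` has a border.
-/

section

variable {α : Type u}

def HasPeriodOn (w : List α) (p lo hi : ℕ) : Prop :=
  ∀ j, lo ≤ j → j + p < hi → w[j]? = w[j + p]?

namespace HasPeriodOn

variable {w : List α} {p q g lo hi : ℕ}

theorem mono {lo' hi' : ℕ} (h : HasPeriodOn w p lo hi) (hlo : lo ≤ lo') (hhi : hi' ≤ hi) :
    HasPeriodOn w p lo' hi' :=
  fun j hj hjp => h j (hlo.trans hj) (by omega)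

theorem union {lo' hi' : ℕ} (h : HasPeriodOn w p lo hi') (h' : HasPeriodOn w p lo' hi)
    (hover : lo' + p ≤ hi') : HasPeriodOn w p lo hi := by
  intro j hj hjp
  by_cases hj' : lo' ≤ j
  · exact h' j hj' hjp
  · exact h j hj (by omega)

theorem sub (hp : HasPeriodOn w p lo hi) (hq : HasPeriodOn w q lo hi) (hpq : p < q)
    (hlen : lo + p + q ≤ hi) : HasPeriodOn w (q - p) lo hi := by
  intro j hj hjqp
  by_cases hjq : j + q < hi
  · calc w[j]? = w[j + q]? := hq j hj hjq
      _ = w[j + (q - p)]? := by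
        rw [show j + q = j + (q - p) + p by omega]
        exact (hp _ (by omega) (by omega)).symm
  · calc w[j]? = w[j - p]? := by
          rw [hp (j - p) (by omega) (by omega), Nat.sub_add_cancel (by omega)]
      _ = w[j - p + q]? := hq (j - p) (by omega) (by omega)
      _ = w[j + (q - p)]? := by congr 1; omega

/-- Fine–Wilf on an interval, in the weak form where its length is at least `p + q`. -/
theorem gcd (hp : HasPeriodOn w p lo hi) (hq : HasPeriodOn w q lo hi) (hp0 : 0 < p)
    (hq0 : 0 < q) (hlen : lo + p + q ≤ hi) : HasPeriodOn w (p.gcd q) lo hi := by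
  induction h : p + q using Nat.strong_induction_on generalizing p q with
  | _ n ih =>
  wlog hpq : p ≤ q generalizing p q
  · rw [Nat.gcd_comm]
    exact this hq hp hq0 hp0 (by omega) (by omega) (by omega)
  rcases hpq.eq_or_lt with rfl | hlt
  · rwa [Nat.gcd_self]
  · rw [← Nat.gcd_sub_self_right hpq]
    exact ih (p + (q - p)) (by omega) hp (hp.sub hq hlt hlen) hp0 (by omega) (by omega) rfl

theorem extend_left {lo' : ℕ} (hp : HasPeriodOn w p lo hi) (hg : HasPeriodOn w g lo' hi)
    (hp0 : 0 < p) (hlen : lo' + p + g ≤ hi) : HasPeriodOn w g lo hi := by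
  intro j hj hjg
  induction h : lo' - j using Nat.strong_induction_on generalizing j with
  | _ n ih =>
  by_cases hj' : lo' ≤ j
  · exact hg j hj' hjg
  · calc w[j]? = w[j + p]? := hp j hj (by omega)
      _ = w[j + p + g]? := ih _ (by omega) (j + p) (by omega) (by omega) rfl
      _ = w[j + g]? := by
        rw [add_right_comm]; exact (hp (j + g) (by omega) (by omega)).symm

theorem extend_right {hi' : ℕ} (hp : HasPeriodOn w p lo hi) (hg : HasPeriodOn w g lo hi')
    (hp0 : 0 < p) (hlen : lo + p + g ≤ hi') : HasPeriodOn w g lo hi := by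
  intro j hj hjg
  induction j using Nat.strong_induction_on with
  | _ j ih =>
  by_cases hj' : j + g < hi'
  · exact hg j hj hj'
  · calc w[j]? = w[j - p]? := by
          rw [hp (j - p) (by omega) (by omega), Nat.sub_add_cancel (by omega)]
      _ = w[j - p + g]? := ih (j - p) (by omega) (by omega) (by omega)
      _ = w[j + g]? := by
        rw [hp (j - p + g) (by omega) (by omega)]; congr 1; omega

end HasPeriodOn

/-- `x ++ v <+: z` encodes an occurrence of `v` in `z` at position `|x|`. -/
theorem hasPeriodOn_of_prefixes {x y v z : List α} (hx : x ++ v <+: z) (hy : y ++ v <+: z)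
    (hxy : x.length ≤ y.length) :
    HasPeriodOn z (y.length - x.length) x.length (y.length + v.length) := by
  have hget : ∀ {l : List α} {i : ℕ}, l <+: z → i < l.length → z[i]? = l[i]? := by
    rintro l i ⟨t, rfl⟩ hi
    exact getElem?_append_left hi
  intro j hj hjp
  rw [hget hx (by rw [length_append]; omega), hget hy (by rw [length_append]; omega),
    getElem?_append_right hj, getElem?_append_right (by omega)]
  congr 1
  omega

theorem BorderFree.false_of_prefix_of_suffix {w b : List α} (hw : BorderFree w) (hb : b ≠ [])
    (hlen : b.length < w.length) (hpre : b <+: w) (hsuf : b <:+ w) : False :=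
  hw b ⟨hb, by rintro rfl; exact lt_irrefl _ hlen, hpre, hsuf⟩

theorem HasPeriodLen.not_borderFree {w : List α} {p : ℕ} (h : HasPeriodLen w p)
    (hp : p < w.length) : ¬ BorderFree w := by
  obtain ⟨hp1, hper⟩ := h
  intro hw
  have hdrop : w.drop p = w.take (w.length - p) := by
    refine ext_getElem? fun n => ?_
    rw [getElem?_drop, getElem?_take]
    split_ifs with hn
    · rw [add_comm]; exact (hper n (by omega)).symm
    · exact getElem?_eq_none (by omega)
  have hlen : (w.take (w.length - p)).length = w.length - p := by
    rw [length_take]; omega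
  refine hw.false_of_prefix_of_suffix (b := w.take (w.length - p))
    (ne_nil_of_length_pos (by omega)) (by omega) (take_prefix _ _) ⟨w.take p, ?_⟩
  rw [← hdrop, take_append_drop]

theorem exists_shorter_localRep_of_localPeriod_ne {z : List α} {m : ℕ} {y : List α}
    (hy : LocalRep z m y) (hne : localPeriod z m ≠ y.length) :
    ∃ y', LocalRep z m y' ∧ y'.length < y.length := by
  obtain ⟨y', hy', hlen⟩ :=
    Nat.sInf_mem (s := {ℓ | ∃ y, LocalRep z m y ∧ y.length = ℓ}) ⟨_, y, hy, rfl⟩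
  exact ⟨y', hy', hlen ▸ lt_of_le_of_ne (Nat.sInf_le ⟨y, hy, rfl⟩) hne⟩

variable {u v : List α}

theorem exists_append_prefix_of_localRep_sq_left (hbf : BorderFree (u ++ v)) {y : List α}
    (hy : LocalRep ((v ++ u) ++ (v ++ u)) v.length y) (hlt : y.length < (u ++ v).length) :
    ∃ s, s ++ v <+: u ++ v ∧ s.length < u.length := by
  obtain ⟨hy0, hleft, hright⟩ := hy
  have htake : ((v ++ u) ++ (v ++ u)).take v.length = v := by simp
  have hdrop : ((v ++ u) ++ (v ++ u)).drop v.length = (u ++ v) ++ u := by simp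
  rw [htake] at hleft
  rw [hdrop] at hright
  have hpre : y <+: u ++ v := by
    rcases hright with h | h
    · exact prefix_of_prefix_length_le h (prefix_append _ _) hlt.le
    · have := h.length_le; simp only [length_append] at this hlt; omega
  rcases hleft with h | ⟨s, rfl⟩
  · exact (hbf.false_of_prefix_of_suffix hy0 hlt hpre (h.trans (suffix_append u v))).elim
  · exact ⟨s, hpre, by simp only [length_append] at hlt; omega⟩

theorem exists_append_prefix_of_localRep_sq_right (hbf : BorderFree (u ++ v)) {y : List α}
    (hy : LocalRep ((v ++ u) ++ (v ++ u)) (v ++ u ++ v).length y)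
    (hlt : y.length < (u ++ v).length) : ∃ q, q ++ u <+: u ++ v ∧ q ≠ [] := by
  obtain ⟨hy0, hleft, hright⟩ := hy
  have htake : ((v ++ u) ++ (v ++ u)).take (v ++ u ++ v).length = v ++ u ++ v := by
    rw [← append_assoc (v ++ u) v u, take_left]
  have hdrop : ((v ++ u) ++ (v ++ u)).drop (v ++ u ++ v).length = u := by
    rw [← append_assoc (v ++ u) v u, drop_left]
  rw [htake] at hleft
  rw [hdrop] at hright
  have hsuf : y <:+ u ++ v := by
    rcases hleft with h | h
    · exact suffix_of_suffix_length_le h ⟨v, (append_assoc _ _ _).symm⟩ hlt.le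
    · have := h.length_le; simp only [length_append] at this hlt; omega
  rcases hright with h | ⟨w, rfl⟩
  · exact (hbf.false_of_prefix_of_suffix hy0 hlt (h.trans (prefix_append u v)) hsuf).elim
  · obtain ⟨q, hq⟩ := hsuf
    refine ⟨q, ⟨w, by rw [← hq, append_assoc]⟩, ?_⟩
    rintro rfl
    simp only [nil_append, append_cancel_left_eq] at hq
    simp [hq] at hlt

theorem not_borderFree_of_append_prefixes {s q : List α} (hs : s ++ v <+: u ++ v)
    (hsu : s.length < u.length) (hq : q ++ u <+: u ++ v) (hq0 : q ≠ []) :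
    ¬ BorderFree (u ++ v) := by
  have hq1 : 0 < q.length := length_pos_of_ne_nil hq0
  have hqv : q.length ≤ v.length := by
    have := hq.length_le
    simp only [length_append] at this
    omega
  have he : HasPeriodOn (u ++ v) (u.length - s.length) s.length (u.length + v.length) :=
    hasPeriodOn_of_prefixes hs prefix_rfl hsu.le
  have hd : HasPeriodOn (u ++ v) q.length 0 (q.length + u.length) := by
    simpa using hasPeriodOn_of_prefixes (x := []) (prefix_append u v) hq (Nat.zero_le _)
  set g := (u.length - s.length).gcd q.length
  have hg0 : 0 < g := Nat.gcd_pos_of_pos_right _ hq1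
  have hge : g ≤ u.length - s.length := Nat.gcd_le_left _ (by omega)
  have hgd : g ≤ q.length := Nat.gcd_le_right _ hq1
  have hg : HasPeriodOn (u ++ v) g s.length (q.length + u.length) :=
    (he.mono le_rfl (by omega)).gcd (hd.mono (Nat.zero_le _) le_rfl) (by omega) hq1 (by omega)
  have hall : HasPeriodOn (u ++ v) g 0 (u.length + v.length) :=
    (hd.extend_left hg hq1 (by omega)).union (he.extend_right hg (by omega) (by omega))
      (by omega)
  refine HasPeriodLen.not_borderFree ⟨hg0, fun k hk => ?_⟩ (by rw [length_append]; omega)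
  exact hall k (Nat.zero_le k) (by rw [length_append] at hk; exact hk)

end

/-- If `x² = (vu)²` is a square whose root conjugate `uv` is border-free, then at least
one of the positions `|v|` or `|vuv|` is critical on `x²`: the local period there equals
`|uv|`. -/
theorem critical_position_of_borderFree_conjugate {α : Type u} (u v : List α)
    (hne : u ++ v ≠ []) (hbf : BorderFree (u ++ v)) :
    localPeriod ((v ++ u) ++ (v ++ u)) v.length = (u ++ v).length ∨
    localPeriod ((v ++ u) ++ (v ++ u)) (v ++ u ++ v).length = (u ++ v).length := by
  have hrep₁ : LocalRep ((v ++ u) ++ (v ++ u)) v.length (u ++ v) :=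
    ⟨hne, Or.inr (by simp [suffix_append]), Or.inl (by simp)⟩
  have hrep₂ : LocalRep ((v ++ u) ++ (v ++ u)) (v ++ u ++ v).length (u ++ v) :=
    ⟨hne, Or.inl (by rw [← append_assoc (v ++ u) v u, take_left]; exact ⟨v, by simp⟩),
      Or.inr (by rw [← append_assoc (v ++ u) v u, drop_left]; exact prefix_append u v)⟩
  by_contra! h
  obtain ⟨y, hy, hylt⟩ := exists_shorter_localRep_of_localPeriod_ne hrep₁ h.1
  obtain ⟨y', hy', hy'lt⟩ := exists_shorter_localRep_of_localPeriod_ne hrep₂ h.2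
  obtain ⟨s, hs, hsu⟩ := exists_append_prefix_of_localRep_sq_left hbf hy hylt
  obtain ⟨q, hq, hq0⟩ := exists_append_prefix_of_localRep_sq_right hbf hy' hy'lt
  exact not_borderFree_of_append_prefixes hs hsu hq hq0 hbf
end

section
/- In the square x² = (vu)², the local period at position |v| has a word y such that v is a proper suffix of y, provided uv is border-free and u, v are nonempty. -/
open List

universe u

/-!
A local repetition word `y` at position `|v|` of `vuvu` is nonempty, suffix-comparable with `v`
and prefix-comparable with `uvu`. If `y` were a suffix of `v`, it would be shorter than `uv`, hence
a prefix of `uv` as well as a suffix of it: a border of `uv`. So `v` is a proper suffix of every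
local repetition word, in particular of a shortest one, which exists since `uv` is one.
-/

section LocalPeriod

variable {α : Type u}

theorem localRep_append_length_iff {x w y : List α} :
    LocalRep (x ++ w) x.length y ↔
      y ≠ [] ∧ (y <:+ x ∨ x <:+ y) ∧ (y <+: w ∨ w <+: y) := by
  simp only [LocalRep, take_left, drop_left]

theorem exists_localRep_length_eq_localPeriod {z y₀ : List α} {m : ℕ} (h : LocalRep z m y₀) :
    ∃ y, LocalRep z m y ∧ y.length = localPeriod z m :=
  Nat.sInf_mem (s := {ℓ | ∃ y, LocalRep z m y ∧ y.length = ℓ}) ⟨_, y₀, h, rfl⟩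

theorem BorderFree.eq_nil_of_suffix_of_prefix {u v y : List α} (hbf : BorderFree (u ++ v))
    (hu : u ≠ []) (hsuf : y <:+ v) (hpre : y <+: u ++ v) : y = [] := by
  by_contra hne
  have hlt : y.length < (u ++ v).length := by
    have := hsuf.length_le
    have := length_pos_iff.mpr hu
    simp only [length_append]
    omega
  exact hbf y ⟨hne, fun h => hlt.ne (congrArg length h), hpre, hsuf.trans (suffix_append u v)⟩

theorem BorderFree.not_suffix_of_localRep_square {u v y : List α} (hbf : BorderFree (u ++ v))
    (hu : u ≠ []) (hy : LocalRep ((v ++ u) ++ (v ++ u)) v.length y) : ¬ y <:+ v := by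
  rw [append_assoc, localRep_append_length_iff] at hy
  obtain ⟨hne, -, hpre⟩ := hy
  intro hsuf
  have hlen : y.length ≤ v.length := hsuf.length_le
  have hu_pos := length_pos_iff.mpr hu
  have hpre' : y <+: u ++ (v ++ u) := hpre.resolve_right fun h => by
    have := h.length_le
    simp only [length_append] at this
    omega
  have huv : u ++ v <+: u ++ (v ++ u) := by
    rw [← append_assoc]
    exact prefix_append _ _
  have hpre_uv : y <+: u ++ v :=
    prefix_of_prefix_length_le hpre' huv (by simp only [length_append]; omega)
  exact hne (hbf.eq_nil_of_suffix_of_prefix hu hsuf hpre_uv)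

end LocalPeriod

theorem local_period_word_has_v_as_proper_suffix_general {α : Type u} (u v : List α)
    (hu : u ≠ []) (hbf : BorderFree (u ++ v)) :
    ∃ y, LocalRep ((v ++ u) ++ (v ++ u)) v.length y ∧
      y.length = localPeriod ((v ++ u) ++ (v ++ u)) v.length ∧
      v <:+ y ∧ v ≠ y := by
  have huv : LocalRep ((v ++ u) ++ (v ++ u)) v.length (u ++ v) := by
    rw [append_assoc, localRep_append_length_iff, ← append_assoc u v u]
    exact ⟨by simp [hu], .inr (suffix_append u v), .inl (prefix_append (u ++ v) u)⟩
  obtain ⟨y, hy, hlen⟩ := exists_localRep_length_eq_localPeriod huv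
  have hnot := hbf.not_suffix_of_localRep_square hu hy
  have hvy : v <:+ y := by
    rw [append_assoc, localRep_append_length_iff] at hy
    exact hy.2.1.resolve_left hnot
  exact ⟨y, hy, hlen, hvy, fun h => hnot (h ▸ suffix_refl v)⟩

/-- In the square `x² = (vu)²` with `uv` border-free and `u`, `v` nonempty, the local
period at position `|v|` is realised by a word `y` having `v` as a proper suffix. -/
theorem local_period_word_has_v_as_proper_suffix {α : Type u} (u v : List α)
    (hu : u ≠ []) (hv : v ≠ []) (hbf : BorderFree (u ++ v)) :
    ∃ y, LocalRep ((v ++ u) ++ (v ++ u)) v.length y ∧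
      y.length = localPeriod ((v ++ u) ++ (v ++ u)) v.length ∧
      v <:+ y ∧ v ≠ y :=
  local_period_word_has_v_as_proper_suffix_general u v hu hbf
end

section
/- Let w be a Lyndon word occurring at interval [i..i+ℓ-1]. If the Lroot of a run lies inside this interval but its Oroot starts before position i, then the Lroot starts exactly at position i. -/
open List

universe u

/-- `k` is the starting position of the greatest proper suffix of the factor `w[i..j]`,
with respect to the strict order `lt` on words. -/
def IsGreatestProperSuffixPos {α : Type u} (lt : List α → List α → Prop)
    (w : List α) (i j k : ℕ) : Prop :=
  i < k ∧ k ≤ j ∧ ∀ k', i < k' → k' ≤ j → k' ≠ k → lt (factor w k' j) (factor w k j)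
/-- `u` is a Lyndon word for the alphabet order `r`: nonempty and lexicographically
smaller than each of its proper nonempty suffixes. -/
def IsLyndonWrt {α : Type u} (r : α → α → Prop) (v : List α) : Prop :=
  v ≠ [] ∧ ∀ t, t <:+ v → t ≠ v → t ≠ [] → List.Lex r v t

/-- The run `[i..j]` in `w` is governed by the order `r`: either the run ends the word,
or the letter following the run is `r`-smaller than the letter one period before it. -/
noncomputable def UseOrd {α : Type u} (r : α → α → Prop) (w : List α) (i j : ℕ) : Prop :=
  j + 1 = w.length ∨
    ∃ a b, w[j + 1]? = some a ∧ w[j + 1 - minPeriod (factor w i j)]? = some b ∧ r a b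

/-- `v` is the Lyndon root (w.r.t. the order `r`) of the run `[i..j]` of `w`:
the Lyndon conjugate of its root. -/
def LyndonRootOf {α : Type u} (r : α → α → Prop) (w : List α) (i j : ℕ) (v : List α) : Prop :=
  IsLyndonWrt r v ∧ IsConjWord (factor w i (i + minPeriod (factor w i j) - 1)) v

/-- `[a..b]` is the Lroot of the run `[i..j]` of `w`: the interval of the first occurrence,
inside the run, of the Lyndon root of the run, taken with respect to the lexicographic order
determined by the letter following the run. -/
noncomputable def IsLroot {α : Type u} [LinearOrder α] (w : List α) (i j a b : ℕ) : Prop :=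
  IsRun w i j ∧
  ∃ v, ((UseOrd (· < ·) w i j ∧ LyndonRootOf (· < ·) w i j v) ∨
        (¬ UseOrd (· < ·) w i j ∧ LyndonRootOf (· > ·) w i j v)) ∧
    i ≤ a ∧ b ≤ j ∧ b + 1 = a + v.length ∧ factor w a b = v ∧
    ∀ a', i ≤ a' → a' < a → factor w a' (a' + v.length - 1) ≠ v
/-- `[a..b]` is the Oroot of the run `[i..j]` of `w` (Bannai et al.): if the run ends the
word, or the letter following the run is smaller than the letter one period before it,
it is the first occurrence of a Lyndon root of the run that is not a prefix of the run;
otherwise it is the interval of the length-`p` prefix of the greatest proper suffix of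
the run factor. -/
noncomputable def IsOroot {α : Type u} [LinearOrder α] (w : List α) (i j a b : ℕ) : Prop :=
  IsRun w i j ∧ b + 1 = a + minPeriod (factor w i j) ∧
  ((UseOrd (· < ·) w i j ∧ i < a ∧ b ≤ j ∧
      ∃ v, (LyndonRootOf (· < ·) w i j v ∨ LyndonRootOf (· > ·) w i j v) ∧
        factor w a b = v ∧
        ∀ a', i < a' → a' < a → factor w a' (a' + minPeriod (factor w i j) - 1) ≠ v) ∨
    (¬ UseOrd (· < ·) w i j ∧
      IsGreatestProperSuffixPos (List.Lex (· < ·)) w i j a))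

/-- `[a..b]` is the Oroot of the run `[i..j]` of `w` obtained with respect to the
alphabet order `r`: the run is governed by `r`, and `[a..b]` is the first occurrence of
the `r`-Lyndon root of the run that is not a prefix of the run. -/
noncomputable def IsOrootOrd {α : Type u} (r : α → α → Prop) (w : List α) (i j a b : ℕ) : Prop :=
  IsRun w i j ∧ UseOrd r w i j ∧ b + 1 = a + minPeriod (factor w i j) ∧ i < a ∧ b ≤ j ∧
  LyndonRootOf r w i j (factor w a b) ∧
  ∀ a', i < a' → a' < a → factor w a' (a' + minPeriod (factor w i j) - 1) ≠ factor w a b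


/-! The Lroot `v` of a run of period `p` starts within the first period of the run, so for
every position `s` of the run with `s < aL < s + p`, the length-`p` window at `s` is a proper
rotation of `v` and compares with `v` as the Lyndon property of `v` dictates. If the run is
governed by `<` and `i < aL`, the window at `i` is a prefix of the Lyndon word and is larger than
`v`, so the suffix of the Lyndon word at `aL` would be smaller than the word itself. Otherwise
`v` is Lyndon for `>`, so the window at `aO` is `<`-smaller than `v`, and `aO < i ≤ aL` would make
the suffix of the run at `aO` smaller than the one at `aL`, although `aO` starts the greatest
proper suffix of the run. -/

namespace List.Lex

variable {α : Type u} {r : α → α → Prop}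

theorem append_of_length_le {u t : List α} (h : Lex r u t) (hlen : t.length ≤ u.length)
    (x y : List α) : Lex r (u ++ x) (t ++ y) := by
  induction h with
  | nil => simp at hlen
  | cons _ ih => exact .cons (ih (by simpa using hlen))
  | rel hab => exact .rel hab

theorem of_isPrefix {x y u t : List α} (h : Lex r x y) (hlen : y.length ≤ x.length)
    (hx : x <+: u) (hy : y <+: t) : Lex r u t := by
  obtain ⟨x', rfl⟩ := hx
  obtain ⟨y', rfl⟩ := hy
  exact h.append_of_length_le hlen x' y'

theorem swap_of_length_le {u t : List α} (h : Lex (fun a b => r b a) u t)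
    (hlen : t.length ≤ u.length) : Lex r t u := by
  induction h with
  | nil => simp at hlen
  | cons _ ih => exact .cons (ih (by simpa using hlen))
  | rel hab => exact .rel hab

end List.Lex

section Words

variable {α : Type u}

theorem IsLyndonWrt.lex_rotate {r : α → α → Prop} {x y : List α} (h : IsLyndonWrt r (x ++ y))
    (hx : x ≠ []) (hy : y ≠ []) : List.Lex r (x ++ y) (y ++ x) := by
  have hne : y ≠ x ++ y := fun e => hx (by simpa using congrArg List.length e)
  simpa using (h.2 y (List.suffix_append x y) hne hy).append_of_length_le (by simp) [] x

theorem IsLyndonWrt.not_lex_of_suffix {r : α → α → Prop} [Std.Asymm r] {u t : List α}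
    (h : IsLyndonWrt r u) (ht : t <:+ u) (hne : t ≠ []) : ¬ List.Lex r t u := by
  intro hlex
  by_cases htu : t = u
  · subst htu
    exact irrefl t hlex
  · exact asymm hlex (h.2 t ht htu hne)

theorem factor_length (w : List α) (a b : ℕ) :
    (factor w a b).length = min (b - a + 1) (w.length - a) := by
  simp [factor]

theorem factor_ne_nil {w : List α} {a : ℕ} (b : ℕ) (ha : a < w.length) :
    factor w a b ≠ [] :=
  List.ne_nil_of_length_pos (by rw [factor_length]; omega)

theorem getElem?_factor (w : List α) {a b n : ℕ} (h : n < b - a + 1) :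
    (factor w a b)[n]? = w[a + n]? := by
  simp [factor, h]

theorem factor_eq_append (w : List α) {a m b : ℕ} (ham : a < m) (hmb : m ≤ b) :
    factor w a b = factor w a (m - 1) ++ factor w m b := by
  unfold factor
  rw [show b - a + 1 = (m - 1 - a + 1) + (b - m + 1) by omega, List.take_add, List.drop_drop,
    show a + (m - 1 - a + 1) = m by omega]

theorem factor_prefix_factor (w : List α) (a : ℕ) {b c : ℕ} (hbc : b ≤ c) :
    factor w a b <+: factor w a c :=
  List.take_prefix_take_left (by omega)

theorem factor_suffix_factor (w : List α) {i a e : ℕ} (hia : i ≤ a) (hae : a ≤ e) :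
    factor w a e <:+ factor w i e := by
  rcases hia.eq_or_lt with rfl | hlt
  · exact List.suffix_refl _
  · rw [factor_eq_append w hlt hae]
    exact List.suffix_append _ _

def PeriodicOn (w : List α) (i j p : ℕ) : Prop :=
  ∀ q, i ≤ q → q + p ≤ j → w[q]? = w[q + p]?

theorem PeriodicOn.factor_eq_factor_add {w : List α} {i j p a b : ℕ} (h : PeriodicOn w i j p)
    (hia : i ≤ a) (hab : a ≤ b) (hbj : b + p ≤ j) :
    factor w a b = factor w (a + p) (b + p) := by
  apply List.ext_getElem?
  intro n
  by_cases hn : n < b - a + 1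
  · rw [getElem?_factor w hn, getElem?_factor w (by omega : n < b + p - (a + p) + 1),
      h (a + n) (by omega) (by omega), show a + n + p = a + p + n by omega]
  · rw [List.getElem?_eq_none (by rw [factor_length]; omega),
      List.getElem?_eq_none (by rw [factor_length]; omega)]

/-- The window at `s` is a proper rotation of the window at `a`. -/
theorem PeriodicOn.lex_of_isLyndonWrt {r : α → α → Prop} {w : List α} {i j p s a : ℕ}
    (h : PeriodicOn w i j p) (his : i ≤ s) (hsa : s < a) (has : a < s + p) (haj : a + p ≤ j + 1)
    (hj : j < w.length) (hlyn : IsLyndonWrt r (factor w a (a + p - 1))) :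
    List.Lex r (factor w a (a + p - 1)) (factor w s (s + p - 1)) := by
  have hwin_s : factor w s (s + p - 1) = factor w s (a - 1) ++ factor w a (s + p - 1) :=
    factor_eq_append w hsa (by omega)
  have hwin_a : factor w a (a + p - 1) = factor w a (s + p - 1) ++ factor w s (a - 1) := by
    rw [factor_eq_append w (by omega : a < s + p) (by omega),
      h.factor_eq_factor_add his (by omega : s ≤ a - 1) (by omega),
      show a - 1 + p = a + p - 1 by omega]
  rw [hwin_a] at hlyn
  rw [hwin_s, hwin_a]
  exact hlyn.lex_rotate (factor_ne_nil _ (by omega)) (factor_ne_nil _ (by omega))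

theorem hasPeriodLen_minPeriod_factor (w : List α) {a : ℕ} (b : ℕ) (ha : a < w.length) :
    HasPeriodLen (factor w a b) (minPeriod (factor w a b)) :=
  Nat.sInf_mem (s := {p | HasPeriodLen (factor w a b) p})
    ⟨(factor w a b).length, by rw [factor_length]; omega, fun k hk => by omega⟩

end Words

section Runs

variable {α : Type u} {w : List α} {i j : ℕ}

theorem IsRun.one_le_minPeriod (h : IsRun w i j) : 1 ≤ minPeriod (factor w i j) :=
  (hasPeriodLen_minPeriod_factor w j (h.1.trans h.2.1)).1

theorem IsRun.periodicOn (h : IsRun w i j) : PeriodicOn w i j (minPeriod (factor w i j)) := by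
  intro q hiq hqj
  obtain ⟨hij, hj, -⟩ := h
  set p := minPeriod (factor w i j)
  have hlen : (factor w i j).length = j - i + 1 := by rw [factor_length]; omega
  have hq := (hasPeriodLen_minPeriod_factor w j (hij.trans hj)).2 (q - i) (by omega)
  rwa [getElem?_factor w (by omega), getElem?_factor w (by omega),
    show i + (q - i) = q by omega, show i + (q - i + p) = q + p by omega] at hq

theorem LyndonRootOf.length_eq {r : α → α → Prop} {v : List α} (h : LyndonRootOf r w i j v)
    (hrun : IsRun w i j) : v.length = minPeriod (factor w i j) := by
  obtain ⟨x, y, hxy, rfl⟩ := h.2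
  have hlen := congrArg List.length hxy
  have := hrun.one_le_minPeriod
  have := hrun.2.1
  have := hrun.2.2.1
  simp only [factor_length, List.length_append] at hlen ⊢
  omega

variable [LinearOrder α] {a b : ℕ}

theorem IsOroot.lt_left (h : IsOroot w i j a b) : i < a := by
  rcases h.2.2 with ⟨-, hia, -⟩ | ⟨-, hgs⟩
  exacts [hia, hgs.1]

theorem IsLroot.add_one_eq (h : IsLroot w i j a b) : b + 1 = a + minPeriod (factor w i j) := by
  obtain ⟨hrun, v, hv, -, -, hb, -⟩ := h
  rcases hv with ⟨-, hv⟩ | ⟨-, hv⟩ <;> rw [hb, hv.length_eq hrun]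

/-- By periodicity, an occurrence of the Lyndon root one period further left would come first. -/
theorem IsLroot.lt_add_minPeriod (h : IsLroot w i j a b) : a < i + minPeriod (factor w i j) := by
  have hb := h.add_one_eq
  obtain ⟨hrun, v, -, -, hbj, hvlen, rfl, hfirst⟩ := h
  set p := minPeriod (factor w i j)
  have hp := hrun.one_le_minPeriod
  by_contra! hle
  apply hfirst (a - p) (by omega) (by omega)
  rw [show (factor w a b).length = p by omega, show a - p + p - 1 = a - 1 by omega,
    hrun.periodicOn.factor_eq_factor_add (by omega) (by omega : a - p ≤ a - 1) (by omega),
    show a - p + p = a by omega, show a - 1 + p = b by omega]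

theorem IsLroot.eq_of_isLyndonWrt (h : IsLroot w i j a b) (hord : UseOrd (· < ·) w i j)
    {k e : ℕ} (hik : i ≤ k) (hka : k ≤ a) (hbe : b ≤ e)
    (hlyn : IsLyndonWrt (· < ·) (factor w k e)) : a = k := by
  have hb := h.add_one_eq
  have ha := h.lt_add_minPeriod
  obtain ⟨hrun, v, hv, -, hbj, -, rfl, -⟩ := h
  have hvlyn : IsLyndonWrt (· < ·) (factor w a b) := by
    rcases hv with ⟨-, hv⟩ | ⟨hnord, -⟩
    exacts [hv.1, absurd hord hnord]
  set p := minPeriod (factor w i j)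
  have hp := hrun.one_le_minPeriod
  have hj := hrun.2.1
  by_contra! hne
  rw [show b = a + p - 1 by omega] at hvlyn
  have hlex := hrun.periodicOn.lex_of_isLyndonWrt hik (by omega) (by omega) (by omega) hj hvlyn
  have hlen : (factor w k (k + p - 1)).length ≤ (factor w a (a + p - 1)).length := by
    simp only [factor_length]; omega
  have hsuf_lt : List.Lex (· < ·) (factor w a e) (factor w k e) :=
    hlex.of_isPrefix hlen (factor_prefix_factor w a (by omega)) (factor_prefix_factor w k (by omega))
  exact hlyn.not_lex_of_suffix (factor_suffix_factor w hka (by omega)) (factor_ne_nil _ (by omega))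
    hsuf_lt

theorem IsLroot.le_of_isOroot {a' b' : ℕ} (h : IsLroot w i j a b) (h' : IsOroot w i j a' b')
    (hord : ¬ UseOrd (· < ·) w i j) : a ≤ a' := by
  have hb := h.add_one_eq
  have ha := h.lt_add_minPeriod
  have hia' := h'.lt_left
  obtain ⟨hrun, v, hv, -, hbj, -, rfl, -⟩ := h
  have hvlyn : IsLyndonWrt (· > ·) (factor w a b) := by
    rcases hv with ⟨hord', -⟩ | ⟨-, hv⟩
    exacts [absurd hord' hord, hv.1]
  have hgreatest : IsGreatestProperSuffixPos (List.Lex (· < ·)) w i j a' := by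
    rcases h'.2.2 with ⟨hord', -⟩ | ⟨-, hgs⟩
    exacts [absurd hord' hord, hgs]
  set p := minPeriod (factor w i j)
  have hp := hrun.one_le_minPeriod
  have hj := hrun.2.1
  by_contra! hlt
  rw [show b = a + p - 1 by omega] at hvlyn
  have hlex := hrun.periodicOn.lex_of_isLyndonWrt hia'.le hlt (by omega) (by omega) hj hvlyn
  have hsuf : List.Lex (· < ·) (factor w a' j) (factor w a j) :=
    (hlex.swap_of_length_le (by simp only [factor_length]; omega)).of_isPrefix
      (by simp only [factor_length]; omega) (factor_prefix_factor w a' (by omega))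
      (factor_prefix_factor w a (by omega))
  exact asymm hsuf (hgreatest.2.2 a (by omega) (by omega) (by omega))

end Runs

theorem oroot_before_lyndon_interval_general {α : Type u} [LinearOrder α] (w : List α)
    (i ℓ ir jr aL bL aO bO : ℕ)
    (hlyn : IsLyndonWrt (· < ·) (factor w i (i + ℓ - 1)))
    (hL : IsLroot w ir jr aL bL) (hO : IsOroot w ir jr aO bO)
    (hin1 : i ≤ aL) (hin2 : bL ≤ i + ℓ - 1) (hout : aO < i) :
    aL = i := by
  have hirO := hO.lt_left
  by_cases hord : UseOrd (· < ·) w ir jr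
  · exact hL.eq_of_isLyndonWrt hord (by omega) hin1 hin2 hlyn
  · have := hL.le_of_isOroot hO hord
    omega

/-- If a Lyndon word occupies the interval `[i..i+ℓ-1]`, a run has its Lroot inside this
interval, and the run's Oroot starts before position `i`, then the Lroot starts exactly
at position `i`. -/
theorem oroot_before_lyndon_interval {α : Type u} [LinearOrder α] (w : List α)
    (i ℓ ir jr aL bL aO bO : ℕ) (hℓ : 0 < ℓ)
    (hlyn : IsLyndonWrt (· < ·) (factor w i (i + ℓ - 1)))
    (hL : IsLroot w ir jr aL bL) (hO : IsOroot w ir jr aO bO)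
    (hin1 : i ≤ aL) (hin2 : bL ≤ i + ℓ - 1) (hout : aO < i) :
    aL = i :=
  oroot_before_lyndon_interval_general w i ℓ ir jr aL bL aO bO hlyn hL hO hin1 hin2 hout
end
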